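/- Let r > 0 and let φ : [0,∞) → ℝ be the real-valued solution of −φ''(x) + q(x)φ(x) = −r²φ(x) with φ(0) = 0, φ'(0) = 1 (i.e., φ = φ(·,ir)), and suppose φ'(1) = r·φ(1) (equivalently, the Jost function vanishes at −ir). Suppose c > 0 satisfies c·( φ(1)² − 2r·∫₀¹ φ(t)² dt ) = 2r, and set A(x) = 1 + c·∫₀ˣ φ(t)² dt. Then A(x) ≥ 1 for all x ≥ 0, A'(x) = 2r·A(x) for all x ≥ 1, and consequently the Jost–Kohn correction q_o := −(log A)'' vanishes identically on (1,∞), so that the transformed potential q* = q + q_o agrees with q (hence vanishes) on (1,∞). -/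

import Mathlib

/-!
Beyond `x = 1` the equation reads `φ'' = r² φ`, so `u = φ' - r φ` solves `u' = -r u`; since
`u(1) = 0`, Grönwall gives `φ' = r φ` on `[1,∞)`. Then `(c φ² - 2 r A)' = 2 c φ (φ' - r φ) = 0`
there, and the normalisation of `c` says precisely `c φ(1)² = 2 r A(1)`. Hence
`A' = c φ² = 2 r A` on `[1,∞)`, so `log A` is affine there and `(log A)'' = 0`.
-/

open MeasureTheory Set

noncomputable section

/-- `y` is a real solution of `-y'' + q y = E y` on `[0,∞)`: `y` is continuously
differentiable with derivative `y'`, `y'` is absolutely continuous (an indefinite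
integral of a locally integrable `y''`), and the equation holds for a.e. `x ≥ 0`. -/
def RealSchrodingerSol (q : ℝ → ℝ) (E : ℝ) (y y' : ℝ → ℝ) : Prop :=
  (∀ x : ℝ, 0 ≤ x → HasDerivAt y (y' x) x) ∧
  ∃ y'' : ℝ → ℝ,
    (∀ X : ℝ, IntegrableOn y'' (Icc 0 X)) ∧
    (∀ x : ℝ, 0 ≤ x → y' x = y' 0 + ∫ t in (0:ℝ)..x, y'' t) ∧
    (∀ᵐ x : ℝ, 0 ≤ x → -y'' x + q x * y x = E * y x)

section Calculus

variable {F : Type*} [NormedAddCommGroup F] [NormedSpace ℝ F]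

theorem hasDerivWithinAt_integral_Ici [CompleteSpace F] {f : ℝ → F} {a x : ℝ}
    (hf : ContinuousOn f (Ici a)) (hx : a ≤ x) :
    HasDerivWithinAt (fun u => ∫ t in a..u, f t) (f x) (Ici a) x := by
  have hint : IntervalIntegrable f volume a x :=
    (hf.mono fun t ht => (uIcc_of_le hx ▸ ht).1).intervalIntegrable
  rcases hx.eq_or_lt with rfl | hax
  · exact intervalIntegral.integral_hasDerivWithinAt_right hint
      (hf.mono Ioi_subset_Ici_self |>.stronglyMeasurableAtFilter_nhdsWithin measurableSet_Ioi a)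
      ((hf a self_mem_Ici).mono Ioi_subset_Ici_self)
  · exact (intervalIntegral.integral_hasDerivAt_right hint
      ((hf.mono Ioi_subset_Ici_self).stronglyMeasurableAtFilter isOpen_Ioi x hax)
      (hf.continuousAt (Ici_mem_nhds hax))).hasDerivWithinAt

theorem eq_zero_of_hasDerivWithinAt_smul_self {f : ℝ → F} {k a x : ℝ}
    (hf : ∀ x, a ≤ x → HasDerivWithinAt f (k • f x) (Ici a) x) (ha : f a = 0) (hx : a ≤ x) :
    f x = 0 :=
  eq_zero_of_abs_deriv_le_mul_abs_self_of_eq_zero_right (K := ‖k‖)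
    (fun t ht => (hf t ht.1).continuousWithinAt.mono Icc_subset_Ici_self)
    (fun t ht => (hf t ht.1).mono (Ici_subset_Ici.2 ht.1)) ha
    (fun t _ => (norm_smul k (f t)).le) x ⟨hx, le_rfl⟩

end Calculus

namespace RealSchrodingerSol

variable {q : ℝ → ℝ} {E : ℝ} {y y' : ℝ → ℝ}

theorem continuousOn (h : RealSchrodingerSol q E y y') : ContinuousOn y (Ici 0) :=
  fun x hx => (h.1 x hx).continuousAt.continuousWithinAt

theorem deriv_eq_sub_integral (h : RealSchrodingerSol q E y y') {a x : ℝ} (ha : 0 ≤ a)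
    (hq : ∀ t, a < t → q t = 0) (hx : a ≤ x) :
    y' x = y' a - E * ∫ t in a..x, y t := by
  obtain ⟨-, y'', hint, hy', hae⟩ := h
  have hii : ∀ b, 0 ≤ b → IntervalIntegrable y'' volume 0 b := fun b hb =>
    (intervalIntegrable_iff_integrableOn_Icc_of_le hb).2 (hint b)
  have heq : ∫ t in a..x, y'' t = ∫ t in a..x, -E * y t := by
    refine intervalIntegral.integral_congr_ae ?_
    filter_upwards [hae] with t ht htmem
    rw [uIoc_of_le hx] at htmem
    have := ht (ha.trans htmem.1.le)
    rw [hq t htmem.1] at this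
    linarith
  have hsplit : ∫ t in (0:ℝ)..x, y'' t = (∫ t in (0:ℝ)..a, y'' t) + ∫ t in a..x, y'' t :=
    (intervalIntegral.integral_add_adjacent_intervals (hii a ha)
      ((hii a ha).symm.trans (hii x (ha.trans hx)))).symm
  rw [hy' x (ha.trans hx), hy' a ha, hsplit, heq, intervalIntegral.integral_const_mul]
  ring

theorem hasDerivWithinAt_deriv (h : RealSchrodingerSol q E y y') {a x : ℝ} (ha : 0 ≤ a)
    (hq : ∀ t, a < t → q t = 0) (hx : a ≤ x) :
    HasDerivWithinAt y' (-E * y x) (Ici a) x := by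
  have hprim := (hasDerivWithinAt_integral_Ici (h.continuousOn.mono (Ici_subset_Ici.2 ha)) hx)
  rw [neg_mul]
  refine ((hprim.const_mul E).const_sub (y' a)).congr (fun t ht => ?_) ?_
  · exact h.deriv_eq_sub_integral ha hq ht
  · exact h.deriv_eq_sub_integral ha hq hx

theorem deriv_eq_mul_of_eq_mul {r : ℝ} (h : RealSchrodingerSol q (-(r ^ 2)) y y') {a x : ℝ}
    (ha : 0 ≤ a) (hq : ∀ t, a < t → q t = 0) (hya : y' a = r * y a) (hx : a ≤ x) :
    y' x = r * y x := by
  have hu : ∀ t, a ≤ t →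
      HasDerivWithinAt (fun s => y' s - r * y s) (-r • (y' t - r * y t)) (Ici a) t := by
    intro t ht
    have := (h.hasDerivWithinAt_deriv ha hq ht).sub
      ((h.1 t (ha.trans ht)).hasDerivWithinAt.const_mul r)
    exact this.congr_deriv (by rw [smul_eq_mul]; ring)
  have hua : y' a - r * y a = 0 := sub_eq_zero.2 hya
  exact sub_eq_zero.1 (eq_zero_of_hasDerivWithinAt_smul_self hu hua hx :)

end RealSchrodingerSol

theorem hasDerivAt_one_add_mul_integral_sq {y A : ℝ → ℝ} {c x : ℝ} (hy : ContinuousOn y (Ici 0))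
    (hA : ∀ x, A x = 1 + c * ∫ t in (0:ℝ)..x, y t ^ 2) (hx : 0 < x) :
    HasDerivAt A (c * y x ^ 2) x := by
  rw [funext hA]
  exact ((hasDerivWithinAt_integral_Ici (hy.pow 2) hx.le).hasDerivAt
    (Ici_mem_nhds hx) |>.const_mul c).const_add 1

theorem mul_sq_eq_of_deriv_eq_mul {y y' A : ℝ → ℝ} {r c a x : ℝ} (ha : 0 < a)
    (hy : ∀ x, 0 ≤ x → HasDerivAt y (y' x) x) (hy' : ∀ x, a ≤ x → y' x = r * y x)
    (hA : ∀ x, A x = 1 + c * ∫ t in (0:ℝ)..x, y t ^ 2) (hAa : c * y a ^ 2 = 2 * r * A a)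
    (hx : a ≤ x) :
    c * y x ^ 2 = 2 * r * A x := by
  have hcont : ContinuousOn y (Ici 0) := fun x hx => (hy x hx).continuousAt.continuousWithinAt
  have hB : ∀ t, a ≤ t → HasDerivWithinAt (fun s => c * y s ^ 2 - 2 * r * A s)
      ((0 : ℝ) • (c * y t ^ 2 - 2 * r * A t)) (Ici a) t := by
    intro t ht
    have ht0 : 0 < t := ha.trans_le ht
    have := (((hy t ht0.le).pow 2).const_mul c).sub
      ((hasDerivAt_one_add_mul_integral_sq hcont hA ht0).const_mul (2 * r))
    refine this.hasDerivWithinAt.congr_deriv ?_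
    rw [hy' t ht, zero_smul]
    ring
  have hBa : c * y a ^ 2 - 2 * r * A a = 0 := sub_eq_zero.2 hAa
  exact sub_eq_zero.1 (eq_zero_of_hasDerivWithinAt_smul_self hB hBa hx :)

theorem deriv_deriv_log_eq_zero {f : ℝ → ℝ} {k a x : ℝ}
    (hf : ∀ x, a < x → HasDerivAt f (k * f x) x) (hf0 : ∀ x, a < x → f x ≠ 0) (hx : a < x) :
    deriv (deriv fun y => Real.log (f y)) x = 0 := by
  have hlog : deriv (fun y => Real.log (f y)) =ᶠ[nhds x] fun _ => k := by
    filter_upwards [Ioi_mem_nhds hx] with y hy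
    exact ((hf y hy).log (hf0 y hy)).deriv.trans (mul_div_cancel_right₀ k (hf0 y hy))
  rw [hlog.deriv_eq, deriv_const]

theorem statement13_general
    (q : ℝ → ℝ)
    (hqsupp : ∀ x : ℝ, x ∉ Icc (0:ℝ) 1 → q x = 0)
    (r : ℝ)
    (φ φ' : ℝ → ℝ)
    (hφ : RealSchrodingerSol q (-(r ^ 2)) φ φ')
    (hbc : φ' 1 = r * φ 1)
    (c : ℝ) (hc : 0 < c)
    (hceq : c * ((φ 1) ^ 2 - 2 * r * ∫ t in (0:ℝ)..1, (φ t) ^ 2) = 2 * r)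
    (A : ℝ → ℝ) (hA : ∀ x : ℝ, A x = 1 + c * ∫ t in (0:ℝ)..x, (φ t) ^ 2) :
    (∀ x : ℝ, 0 ≤ x → 1 ≤ A x) ∧
    (∀ x : ℝ, 1 ≤ x → HasDerivAt A (2 * r * A x) x) ∧
    (∀ x : ℝ, 1 < x → deriv (deriv (fun y => Real.log (A y))) x = 0) ∧
    (∀ x : ℝ, 1 < x →
      q x + -(deriv (deriv (fun y => Real.log (A y))) x) = q x) := by
  have hA_ge : ∀ x : ℝ, 0 ≤ x → 1 ≤ A x := fun x hx => by
    rw [hA x]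
    have : 0 ≤ ∫ t in (0:ℝ)..x, φ t ^ 2 :=
      intervalIntegral.integral_nonneg hx fun t _ => sq_nonneg (φ t)
    nlinarith
  have hφ' : ∀ x, 1 ≤ x → φ' x = r * φ x := fun x =>
    hφ.deriv_eq_mul_of_eq_mul zero_le_one (fun t ht => hqsupp t fun h => ht.not_ge h.2) hbc
  have hφA : ∀ x, 1 ≤ x → c * φ x ^ 2 = 2 * r * A x := fun x =>
    mul_sq_eq_of_deriv_eq_mul one_pos hφ.1 hφ' hA (by rw [hA 1]; linear_combination hceq)
  have hA' : ∀ x, 1 ≤ x → HasDerivAt A (2 * r * A x) x := fun x hx =>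
    hφA x hx ▸ hasDerivAt_one_add_mul_integral_sq hφ.continuousOn hA (one_pos.trans_le hx)
  have hlog : ∀ x, 1 < x → deriv (deriv fun y => Real.log (A y)) x = 0 := fun x =>
    deriv_deriv_log_eq_zero (fun y hy => hA' y hy.le)
      (fun y hy => (one_pos.trans_le (hA_ge y (zero_le_one.trans hy.le))).ne')
  exact ⟨hA_ge, hA', hlog, fun x hx => by rw [hlog x hx, neg_zero, add_zero]⟩

/-- If `φ = φ(·,ir)` is real with `φ'(1) = r φ(1)` and `c > 0` satisfies
`c(φ(1)² - 2r ∫₀¹ φ²) = 2r`, then `A(x) = 1 + c ∫₀ˣ φ²` satisfies `A ≥ 1`,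
`A' = 2rA` on `[1,∞)`, and the Jost–Kohn correction `q₀ = -(log A)''` vanishes on
`(1,∞)`, so the transformed potential `q + q₀` agrees with `q` there. -/
theorem statement13
    (q : ℝ → ℝ) (hqint : Integrable q)
    (hqsupp : ∀ x : ℝ, x ∉ Icc (0:ℝ) 1 → q x = 0)
    (r : ℝ) (hr : 0 < r)
    (φ φ' : ℝ → ℝ)
    (hφ : RealSchrodingerSol q (-(r ^ 2)) φ φ')
    (hφ0 : φ 0 = 0) (hφ'0 : φ' 0 = 1)
    (hbc : φ' 1 = r * φ 1)
    (c : ℝ) (hc : 0 < c)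
    (hceq : c * ((φ 1) ^ 2 - 2 * r * ∫ t in (0:ℝ)..1, (φ t) ^ 2) = 2 * r)
    (A : ℝ → ℝ) (hA : ∀ x : ℝ, A x = 1 + c * ∫ t in (0:ℝ)..x, (φ t) ^ 2) :
    (∀ x : ℝ, 0 ≤ x → 1 ≤ A x) ∧
    (∀ x : ℝ, 1 ≤ x → HasDerivAt A (2 * r * A x) x) ∧
    (∀ x : ℝ, 1 < x → deriv (deriv (fun y => Real.log (A y))) x = 0) ∧
    (∀ x : ℝ, 1 < x →
      q x + -(deriv (deriv (fun y => Real.log (A y))) x) = q x) :=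
  statement13_general q hqsupp r φ φ' hφ hbc c hc hceq A hA
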